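/- arXiv:2210.05922 — 2 statements merged into one kernel-verified Lean document; each statement's English description precedes it below -/
import Mathlib

section
/- Let d_b = d_{π_b,γ}^{P*} be the discounted stationary distribution of behavior policy π_b, assumed everywhere positive on a finite S×A. Define the operator T by (Tω)(s',a') = [γ·π(a'|s')·Σ_{s,a} P*(s'|s,a)·ω(s,a)·d_b(s,a) + (1−γ)·μ₀(s')·π(a'|s')] / d_b(s',a'). Then for any functions ω, u: S×A → ℝ, ||Tω − Tu||_∞ ≤ c·||ω − u||_∞, where c = max_{s',a'} { (π(a'|s')/π_b(a'|s')) · c(s') } and c(s') = 1 − (1−γ)μ₀(s') / (γ·Σ_{s,a} P*(s'|s,a)d_b(s,a) + (1−γ)μ₀(s')) < 1. In particular, if π(a'|s')/π_b(a'|s') < 1/c(s') for all (s',a'), then T is a contraction and has a unique fixed point, with iterates converging geometrically. -/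
open Finset

/-! The difference `Tω − Tu` at `(s', a')` is `γ π(a'|s') / d_b(s', a')` times a sum of
`ω − u` against the nonnegative weights `P*(s'|s,a) d_b(s,a)`, whose total mass is the inflow
`B(s') = Σ_{s,a} P*(s'|s,a) d_b(s,a)`; so it is at most that factor times `B(s') ‖ω − u‖_∞`.
The balance equation reads `d_b(s', a') = (γ B(s') + (1 − γ) μ₀(s')) π_b(a'|s')`, hence
`γ π(a'|s') B(s') / d_b(s', a')` is exactly `(π(a'|s') / π_b(a'|s')) c(s')`. -/

theorem abs_sum_mul_le_sup'_mul_sum {ι : Type*} [Fintype ι] [Nonempty ι] (w f : ι → ℝ)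
    (hw : ∀ i, 0 ≤ w i) :
    |∑ i, w i * f i| ≤ univ.sup' univ_nonempty (fun i => |f i|) * ∑ i, w i := by
  rw [mul_sum]
  refine (abs_sum_le_sum_abs _ _).trans (sum_le_sum fun i _ => ?_)
  rw [abs_mul, abs_of_nonneg (hw i), mul_comm]
  exact mul_le_mul_of_nonneg_right (le_sup' (fun i => |f i|) (mem_univ i)) (hw i)

theorem mul_lt_one_of_lt_one_div {r c : ℝ} (hr : 0 ≤ r) (h : r < 1 / c) : r * c < 1 := by
  rcases le_or_gt c 0 with hc | hc
  · exact (mul_nonpos_of_nonneg_of_nonpos hr hc).trans_lt one_pos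
  · exact (lt_div_iff₀ hc).mp h

theorem mul_div_eq_div_mul_one_sub_div_of_eq {γ B m p q d : ℝ} (hq : 0 < q) (hd : 0 < d)
    (hbal : d = γ * B * q + m * q) :
    γ * p * B / d = p / q * (1 - m / (γ * B + m)) := by
  have hD : γ * B + m ≠ 0 := by
    rintro h
    rw [← add_mul, h, zero_mul] at hbal
    exact hd.ne' hbal
  rw [hbal, one_sub_div hD]
  field_simp
  ring

theorem apply_sub_apply_eq_mul_sum {S A : Type*} [Fintype S] [Fintype A] (γ : ℝ)
    (μ0 : S → ℝ) (pol : S → A → ℝ) (Pst : S → A → S → ℝ) (db : S → A → ℝ)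
    (T : (S → A → ℝ) → S → A → ℝ)
    (hT : ∀ ω s' a', T ω s' a' =
      (γ * pol s' a' * (∑ s, ∑ a, Pst s a s' * ω s a * db s a)
        + (1 - γ) * μ0 s' * pol s' a') / db s' a')
    (ω u : S → A → ℝ) (s' : S) (a' : A) :
    T ω s' a' - T u s' a' = γ * pol s' a' / db s' a' *
      ∑ x : S × A, Pst x.1 x.2 s' * db x.1 x.2 * (ω x.1 x.2 - u x.1 x.2) := by
  have hsum : ∀ v : S → A → ℝ, ∑ s, ∑ a, Pst s a s' * v s a * db s a
      = ∑ x : S × A, Pst x.1 x.2 s' * db x.1 x.2 * v x.1 x.2 := fun v => by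
    simp only [Fintype.sum_prod_type, mul_right_comm _ (db _ _)]
  simp only [hT, hsum, mul_sub, sum_sub_distrib]
  ring

theorem miw_operator_contraction_general {S A : Type*} [Fintype S] [Fintype A] [Nonempty S] [Nonempty A]
    (γ : ℝ) (hγ0 : 0 ≤ γ)
    (μ0 : S → ℝ) (pol polb : S → A → ℝ) (Pst : S → A → S → ℝ)
    (hpol0 : ∀ s a, 0 ≤ pol s a)
    (hpolbpos : ∀ s a, 0 < polb s a)
    (hPst0 : ∀ s a s', 0 ≤ Pst s a s')
    -- d_b = d_{π_b,γ}^{P*}, everywhere positive, satisfying the balance equation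
    (db : S → A → ℝ) (hdbpos : ∀ s a, 0 < db s a)
    (hdb : ∀ s' a', db s' a' =
      γ * (∑ s, ∑ a, Pst s a s' * db s a) * polb s' a' + (1 - γ) * μ0 s' * polb s' a')
    (c : S → ℝ)
    (hc : ∀ s', c s' = 1 - (1 - γ) * μ0 s'
      / (γ * (∑ s, ∑ a, Pst s a s' * db s a) + (1 - γ) * μ0 s'))
    (cmax : ℝ)
    (hcmax : cmax = (Finset.univ : Finset (S × A)).sup' Finset.univ_nonempty
      (fun x => pol x.1 x.2 / polb x.1 x.2 * c x.1))
    (T : (S → A → ℝ) → S → A → ℝ)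
    (hT : ∀ ω s' a', T ω s' a' =
      (γ * pol s' a' * (∑ s, ∑ a, Pst s a s' * ω s a * db s a)
        + (1 - γ) * μ0 s' * pol s' a') / db s' a') :
    (∀ ω u : S → A → ℝ, ∀ s' a',
        |T ω s' a' - T u s' a'| ≤ cmax * (Finset.univ : Finset (S × A)).sup'
          Finset.univ_nonempty (fun x => |ω x.1 x.2 - u x.1 x.2|))
    ∧ ((∀ s' a', pol s' a' / polb s' a' < 1 / c s') → cmax < 1) := by
  refine ⟨fun ω u s' a' => ?_, fun h => ?_⟩
  · set M := univ.sup' univ_nonempty (fun x : S × A => |ω x.1 x.2 - u x.1 x.2|)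
    have hM : 0 ≤ M := (abs_nonneg _).trans
      (le_sup' (fun x : S × A => |ω x.1 x.2 - u x.1 x.2|) (mem_univ (s', a')))
    have hgain : 0 ≤ γ * pol s' a' / db s' a' :=
      div_nonneg (mul_nonneg hγ0 (hpol0 s' a')) (hdbpos s' a').le
    have hweights : ∀ x : S × A, 0 ≤ Pst x.1 x.2 s' * db x.1 x.2 :=
      fun x => mul_nonneg (hPst0 x.1 x.2 s') (hdbpos x.1 x.2).le
    calc |T ω s' a' - T u s' a'|
        = γ * pol s' a' / db s' a' *
            |∑ x : S × A, Pst x.1 x.2 s' * db x.1 x.2 * (ω x.1 x.2 - u x.1 x.2)| := by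
          rw [apply_sub_apply_eq_mul_sum γ μ0 pol Pst db T hT, abs_mul, abs_of_nonneg hgain]
      _ ≤ γ * pol s' a' / db s' a' * (M * ∑ s, ∑ a, Pst s a s' * db s a) := by
          rw [← Fintype.sum_prod_type' (fun s a => Pst s a s' * db s a)]
          exact mul_le_mul_of_nonneg_left (abs_sum_mul_le_sup'_mul_sum _ _ hweights) hgain
      _ = pol s' a' / polb s' a' * c s' * M := by
          rw [hc, ← mul_div_eq_div_mul_one_sub_div_of_eq (hpolbpos s' a') (hdbpos s' a')
            (hdb s' a')]
          ring
      _ ≤ cmax * M := by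
          rw [hcmax]
          exact mul_le_mul_of_nonneg_right (le_sup' (fun x => pol x.1 x.2 / polb x.1 x.2 * c x.1)
            (mem_univ (s', a'))) hM
  · rw [hcmax, sup'_lt_iff]
    exact fun x _ => mul_lt_one_of_lt_one_div
      (div_nonneg (hpol0 x.1 x.2) (hpolbpos x.1 x.2).le) (h x.1 x.2)

/-- Proposition 1 of the paper: the operator T satisfies
||Tω − Tu||_∞ ≤ c ||ω − u||_∞ with c = max_{s',a'} (π(a'|s')/π_b(a'|s')) c(s'),
c(s') = 1 − (1−γ)μ₀(s')/(γ Σ_{s,a} P*(s'|s,a)d_b(s,a) + (1−γ)μ₀(s'));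
in particular, if π(a'|s')/π_b(a'|s') < 1/c(s') for all (s',a'), then c < 1. -/
theorem miw_operator_contraction {S A : Type*} [Fintype S] [Fintype A] [Nonempty S] [Nonempty A]
    (γ : ℝ) (hγ0 : 0 ≤ γ) (hγ1 : γ < 1)
    (μ0 : S → ℝ) (pol polb : S → A → ℝ) (Pst : S → A → S → ℝ)
    (hμ0 : ∀ s, 0 ≤ μ0 s) (hμ1 : ∑ s, μ0 s = 1)
    (hpol0 : ∀ s a, 0 ≤ pol s a) (hpol1 : ∀ s, ∑ a, pol s a = 1)
    (hpolbpos : ∀ s a, 0 < polb s a) (hpolb1 : ∀ s, ∑ a, polb s a = 1)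
    (hPst0 : ∀ s a s', 0 ≤ Pst s a s') (hPst1 : ∀ s a, ∑ s', Pst s a s' = 1)
    -- d_b = d_{π_b,γ}^{P*}, everywhere positive, satisfying the balance equation
    (db : S → A → ℝ) (hdbpos : ∀ s a, 0 < db s a)
    (hdb : ∀ s' a', db s' a' =
      γ * (∑ s, ∑ a, Pst s a s' * db s a) * polb s' a' + (1 - γ) * μ0 s' * polb s' a')
    (c : S → ℝ)
    (hc : ∀ s', c s' = 1 - (1 - γ) * μ0 s'
      / (γ * (∑ s, ∑ a, Pst s a s' * db s a) + (1 - γ) * μ0 s'))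
    (cmax : ℝ)
    (hcmax : cmax = (Finset.univ : Finset (S × A)).sup' Finset.univ_nonempty
      (fun x => pol x.1 x.2 / polb x.1 x.2 * c x.1))
    (T : (S → A → ℝ) → S → A → ℝ)
    (hT : ∀ ω s' a', T ω s' a' =
      (γ * pol s' a' * (∑ s, ∑ a, Pst s a s' * ω s a * db s a)
        + (1 - γ) * μ0 s' * pol s' a') / db s' a') :
    (∀ ω u : S → A → ℝ, ∀ s' a',
        |T ω s' a' - T u s' a'| ≤ cmax * (Finset.univ : Finset (S × A)).sup'
          Finset.univ_nonempty (fun x => |ω x.1 x.2 - u x.1 x.2|))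
    ∧ ((∀ s' a', pol s' a' / polb s' a' < 1 / c s') → cmax < 1) :=
  miw_operator_contraction_general γ hγ0 μ0 pol polb Pst hpol0 hpolbpos hPst0 db hdbpos hdb c hc
    cmax hcmax T hT
end

section
/- In a finite MDP, for any two transition kernels P* and P̂ and a policy π, the difference of returns satisfies the simulation-lemma identity: J(π,P̂) − J(π,P*) = γ·E_{(s,a)∼d_{π,γ}^{P*}}[ E_{s'∼P̂(·|s,a)}[V_π^{P̂}(s')] − E_{s'∼P*(·|s,a)}[V_π^{P̂}(s')] ], where V_π^{P̂}(s) = E_{a∼π(·|s)}[Q_π^{P̂}(s,a)]. -/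
/-- simulation lemma: J(π,P̂) − J(π,P*) =
γ E_{(s,a)∼d_{π,γ}^{P*}}[ E_{s'∼P̂(·|s,a)}[V_π^{P̂}(s')] − E_{s'∼P*(·|s,a)}[V_π^{P̂}(s')] ]. -/
theorem simulation_lemma {S A : Type*} [Fintype S] [Fintype A]
    (γ rmax : ℝ) (hγ0 : 0 ≤ γ) (hγ1 : γ < 1)
    (μ0 : S → ℝ) (pol : S → A → ℝ) (Pst Phat : S → A → S → ℝ) (r : S → A → ℝ)
    (hμ0 : ∀ s, 0 ≤ μ0 s) (hμ1 : ∑ s, μ0 s = 1)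
    (hpol0 : ∀ s a, 0 ≤ pol s a) (hpol1 : ∀ s, ∑ a, pol s a = 1)
    (hPst0 : ∀ s a s', 0 ≤ Pst s a s') (hPst1 : ∀ s a, ∑ s', Pst s a s' = 1)
    (hPhat0 : ∀ s a s', 0 ≤ Phat s a s') (hPhat1 : ∀ s a, ∑ s', Phat s a s' = 1)
    (hr : ∀ s a, |r s a| ≤ rmax)
    -- d = d_{π,γ}^{P*}
    (d : S → A → ℝ) (hd0 : ∀ s a, 0 ≤ d s a)
    (hd : ∀ s' a', d s' a' =
      γ * (∑ s, ∑ a, Pst s a s' * d s a) * pol s' a' + (1 - γ) * μ0 s' * pol s' a')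
    -- Qhat = Q_π^{P̂}, Vhat = V_π^{P̂}
    (Qhat : S → A → ℝ)
    (hQ : ∀ s a, Qhat s a = r s a + γ * ∑ s', Phat s a s' * ∑ a', pol s' a' * Qhat s' a') :
    (1 - γ) * (∑ s, μ0 s * ∑ a, pol s a * Qhat s a) - (∑ s, ∑ a, d s a * r s a)
      = γ * ∑ s, ∑ a, d s a *
          ((∑ s', Phat s a s' * ∑ a', pol s' a' * Qhat s' a')
            - ∑ s', Pst s a s' * ∑ a', pol s' a' * Qhat s' a') := by
  set V : S → ℝ := fun s => ∑ a, pol s a * Qhat s a with hV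
  have h1 : ∑ s, ∑ a, d s a * Qhat s a
      = (∑ s, ∑ a, d s a * r s a) + γ * ∑ s, ∑ a, d s a * ∑ s', Phat s a s' * V s' := by
    rw [Finset.mul_sum]
    rw [← Finset.sum_add_distrib]
    congr 1; ext s
    rw [Finset.mul_sum, ← Finset.sum_add_distrib]
    congr 1; ext a
    rw [hQ s a]; ring
  have h2 : ∑ s, ∑ a, d s a * Qhat s a
      = γ * (∑ s, ∑ a, d s a * ∑ s', Pst s a s' * V s') + (1 - γ) * ∑ s, μ0 s * V s := by
    have lhs : ∑ s', ∑ a', d s' a' * Qhat s' a'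
        = γ * (∑ s', (∑ s, ∑ a, Pst s a s' * d s a) * V s') + (1 - γ) * ∑ s', μ0 s' * V s' := by
      rw [Finset.mul_sum, Finset.mul_sum, ← Finset.sum_add_distrib]
      congr 1; ext s'
      have : ∑ a', d s' a' * Qhat s' a'
          = ∑ a', (γ * (∑ s, ∑ a, Pst s a s' * d s a) * (pol s' a' * Qhat s' a')
              + (1 - γ) * μ0 s' * (pol s' a' * Qhat s' a')) := by
        congr 1; ext a'; rw [hd s' a']; ring
      rw [this, Finset.sum_add_distrib, ← Finset.mul_sum, ← Finset.mul_sum]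
      ring
    have swap : ∑ s', (∑ s, ∑ a, Pst s a s' * d s a) * V s'
        = ∑ s, ∑ a, d s a * ∑ s', Pst s a s' * V s' := by
      simp only [Finset.sum_mul, Finset.mul_sum]
      rw [Finset.sum_comm]
      congr 1; ext s
      rw [Finset.sum_comm]
      congr 1; ext a; congr 1; ext s'; ring
    rw [lhs, swap]
  have h3 : γ * ∑ s, ∑ a, d s a *
          ((∑ s', Phat s a s' * V s') - ∑ s', Pst s a s' * V s')
      = γ * (∑ s, ∑ a, d s a * ∑ s', Phat s a s' * V s')
        - γ * (∑ s, ∑ a, d s a * ∑ s', Pst s a s' * V s') := by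
    simp only [mul_sub, Finset.sum_sub_distrib, Finset.mul_sum]
  rw [h3]
  linarith [h1, h2]
end
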